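/- Let H be a Hopf quasigroup and let M be a left H-quasimodule and right H-comodule. Then the compatibility condition ρ(h·m) = Σ h₍₂₎₍₁₎·m₍₀₎ ⊗ (β(h₍₂₎₍₂₎)m₍₁₎)α(S⁻¹(h₍₁₎)) holds for all h, m if and only if Σ h₍₁₎·m₍₀₎ ⊗ β(h₍₂₎)m₍₁₎ = Σ (h₍₂₎·m)₍₀₎ ⊗ (h₍₂₎·m)₍₁₎α(h₍₁₎) holds for all h, m. -/
import Mathlib


open TensorProduct

/-- The data of a Hopf quasigroup without its antipode: a unital (possibly nonassociative)
algebra together with a coassociative counital comultiplication which, together with the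
counit, is an algebra homomorphism. Everything is expressed in terms of linear maps, so that
Sweedler-notation identities become equalities of composites of linear maps. -/
structure HopfQuasigroupData (k H : Type*) [Field k] [AddCommGroup H] [Module k H] where
  mul : H ⊗[k] H →ₗ[k] H
  one : H
  comul : H →ₗ[k] H ⊗[k] H
  counit : H →ₗ[k] k
  one_mul : ∀ x : H, mul (one ⊗ₜ[k] x) = x
  mul_one : ∀ x : H, mul (x ⊗ₜ[k] one) = x
  coassoc : (TensorProduct.assoc k H H H).toLinearMap ∘ₗ comul.rTensor H ∘ₗ comul =
    comul.lTensor H ∘ₗ comul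
  counit_comul : (TensorProduct.lid k H).toLinearMap ∘ₗ counit.rTensor H ∘ₗ comul =
    LinearMap.id
  comul_counit : (TensorProduct.rid k H).toLinearMap ∘ₗ counit.lTensor H ∘ₗ comul =
    LinearMap.id
  comul_mul : comul ∘ₗ mul = TensorProduct.map mul mul ∘ₗ
    (TensorProduct.tensorTensorTensorComm k H H H H).toLinearMap ∘ₗ
      TensorProduct.map comul comul
  comul_one : comul one = one ⊗ₜ[k] one
  counit_mul : ∀ x y : H, counit (mul (x ⊗ₜ[k] y)) = counit x * counit y
  counit_one : counit one = 1

namespace HopfQuasigroupData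

variable {k H : Type*} [Field k] [AddCommGroup H] [Module k H]

/-- The linear map `h ⊗ g ↦ ε(h)g`. -/
noncomputable def εl (D : HopfQuasigroupData k H) : H ⊗[k] H →ₗ[k] H :=
  (TensorProduct.lid k H).toLinearMap ∘ₗ D.counit.rTensor H

/-- The linear map `g ⊗ h ↦ ε(h)g`. -/
noncomputable def εr (D : HopfQuasigroupData k H) : H ⊗[k] H →ₗ[k] H :=
  (TensorProduct.rid k H).toLinearMap ∘ₗ D.counit.lTensor H

/-- `S` is an antipode for the Hopf quasigroup data `D`. -/
def IsAntipode (D : HopfQuasigroupData k H) (S : H →ₗ[k] H) : Prop :=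
  (D.mul ∘ₗ TensorProduct.map S D.mul ∘ₗ (TensorProduct.assoc k H H H).toLinearMap ∘ₗ
      D.comul.rTensor H = D.εl) ∧
  (D.mul ∘ₗ TensorProduct.map LinearMap.id (D.mul ∘ₗ S.rTensor H) ∘ₗ
      (TensorProduct.assoc k H H H).toLinearMap ∘ₗ D.comul.rTensor H = D.εl) ∧
  (D.mul ∘ₗ TensorProduct.map (D.mul ∘ₗ S.lTensor H) LinearMap.id ∘ₗ
      (TensorProduct.assoc k H H H).symm.toLinearMap ∘ₗ D.comul.lTensor H = D.εr) ∧
  (D.mul ∘ₗ TensorProduct.map D.mul S ∘ₗ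
      (TensorProduct.assoc k H H H).symm.toLinearMap ∘ₗ D.comul.lTensor H = D.εr)

end HopfQuasigroupData

/-- An automorphism of a Hopf quasigroup `(D, S)`: a linear automorphism which is an algebra
and coalgebra morphism and commutes with the antipode. -/
structure HopfQuasigroupAut {k H : Type*} [Field k] [AddCommGroup H] [Module k H]
    (D : HopfQuasigroupData k H) (S : H →ₗ[k] H) where
  toLinearEquiv : H ≃ₗ[k] H
  map_mul : toLinearEquiv.toLinearMap ∘ₗ D.mul =
    D.mul ∘ₗ TensorProduct.map toLinearEquiv.toLinearMap toLinearEquiv.toLinearMap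
  map_one : toLinearEquiv D.one = D.one
  map_comul : D.comul ∘ₗ toLinearEquiv.toLinearMap =
    TensorProduct.map toLinearEquiv.toLinearMap toLinearEquiv.toLinearMap ∘ₗ D.comul
  map_counit : D.counit ∘ₗ toLinearEquiv.toLinearMap = D.counit
  comm_antipode : toLinearEquiv.toLinearMap ∘ₗ S = S ∘ₗ toLinearEquiv.toLinearMap

namespace HopfQuasigroupAut

variable {k H : Type*} [Field k] [AddCommGroup H] [Module k H]
  {D : HopfQuasigroupData k H} {S : H →ₗ[k] H}

/-- The underlying linear map of a Hopf quasigroup automorphism. -/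
def lmap (α : HopfQuasigroupAut D S) : H →ₗ[k] H := α.toLinearEquiv.toLinearMap

/-- The underlying linear map of the inverse of a Hopf quasigroup automorphism. -/
def invmap (α : HopfQuasigroupAut D S) : H →ₗ[k] H := α.toLinearEquiv.symm.toLinearMap

end HopfQuasigroupAut

section Quasimodules

variable {k H M : Type*} [Field k] [AddCommGroup H] [Module k H]
  [AddCommGroup M] [Module k M]

/-- The linear map `h ⊗ m ↦ ε(h)m`. -/
noncomputable def εAct (D : HopfQuasigroupData k H) (M : Type*) [AddCommGroup M]
    [Module k M] : H ⊗[k] M →ₗ[k] M :=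
  (TensorProduct.lid k M).toLinearMap ∘ₗ D.counit.rTensor M

/-- `act` makes `M` a left quasimodule over the Hopf quasigroup `(D, S)`:
`1·m = m` and `Σ h₁·(S(h₂)·m) = Σ S(h₁)·(h₂·m) = ε(h)m`. -/
def IsQuasimodule (D : HopfQuasigroupData k H) (S : H →ₗ[k] H)
    (act : H ⊗[k] M →ₗ[k] M) : Prop :=
  (∀ m : M, act (D.one ⊗ₜ[k] m) = m) ∧
  (act ∘ₗ (act ∘ₗ S.rTensor M).lTensor H ∘ₗ (TensorProduct.assoc k H H M).toLinearMap ∘ₗ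
      D.comul.rTensor M = εAct D M) ∧
  (act ∘ₗ S.rTensor M ∘ₗ act.lTensor H ∘ₗ (TensorProduct.assoc k H H M).toLinearMap ∘ₗ
      D.comul.rTensor M = εAct D M)

/-- `coact` makes `M` a (counital, coassociative) right comodule over `D`. -/
def IsComodule (D : HopfQuasigroupData k H) (coact : M →ₗ[k] M ⊗[k] H) : Prop :=
  ((TensorProduct.rid k M).toLinearMap ∘ₗ D.counit.lTensor M ∘ₗ coact = LinearMap.id) ∧
  (coact.rTensor H ∘ₗ coact =
    (TensorProduct.assoc k M H H).symm.toLinearMap ∘ₗ D.comul.lTensor M ∘ₗ coact)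

/-- The shuffle `(h₁ ⊗ (h₂₁ ⊗ h₂₂)) ⊗ (m₀ ⊗ m₁) ↦ (h₂₁ ⊗ m₀) ⊗ ((h₂₂ ⊗ m₁) ⊗ h₁)`. -/
noncomputable def ydShuffle (k H M : Type*) [Field k] [AddCommGroup H] [Module k H]
    [AddCommGroup M] [Module k M] :
    (H ⊗[k] (H ⊗[k] H)) ⊗[k] (M ⊗[k] H) →ₗ[k] (H ⊗[k] M) ⊗[k] ((H ⊗[k] H) ⊗[k] H) :=
  (TensorProduct.assoc k (H ⊗[k] M) (H ⊗[k] H) H).toLinearMap ∘ₗ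
    (TensorProduct.comm k H ((H ⊗[k] M) ⊗[k] (H ⊗[k] H))).toLinearMap ∘ₗ
      ((TensorProduct.tensorTensorTensorComm k H H M H).toLinearMap.lTensor H) ∘ₗ
        (TensorProduct.assoc k H (H ⊗[k] H) (M ⊗[k] H)).toLinearMap

/-- The `(α,β)`-Yetter–Drinfeld quasimodule compatibility condition (Eq. (5.1)):
`ρ(h·m) = Σ h₂₁·m₀ ⊗ (β(h₂₂)m₁)α(S⁻¹(h₁))`. -/
noncomputable def YDCompat (D : HopfQuasigroupData k H) (Sinv : H →ₗ[k] H)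
    (α β : H →ₗ[k] H) (act : H ⊗[k] M →ₗ[k] M) (coact : M →ₗ[k] M ⊗[k] H) : Prop :=
  coact ∘ₗ act =
    TensorProduct.map act
        (D.mul ∘ₗ TensorProduct.map (D.mul ∘ₗ β.rTensor H) (α ∘ₗ Sinv)) ∘ₗ
      ydShuffle k H M ∘ₗ coact.lTensor (H ⊗[k] (H ⊗[k] H)) ∘ₗ
        (D.comul.lTensor H).rTensor M ∘ₗ D.comul.rTensor M

end Quasimodules

section Statement10

variable {k H M : Type*} [Field k] [AddCommGroup H] [Module k H]
  [AddCommGroup M] [Module k M]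

/-- The left-hand side of Eq. (5.2): `h ⊗ m ↦ Σ h₁·m₀ ⊗ β(h₂)m₁`. -/
noncomputable def eq52lhs (D : HopfQuasigroupData k H) (β : H →ₗ[k] H)
    (act : H ⊗[k] M →ₗ[k] M) (coact : M →ₗ[k] M ⊗[k] H) : H ⊗[k] M →ₗ[k] M ⊗[k] H :=
  TensorProduct.map act (D.mul ∘ₗ β.rTensor H) ∘ₗ
    (TensorProduct.tensorTensorTensorComm k H H M H).toLinearMap ∘ₗ
      coact.lTensor (H ⊗[k] H) ∘ₗ D.comul.rTensor M

/-- The right-hand side of Eq. (5.2): `h ⊗ m ↦ Σ (h₂·m)₀ ⊗ (h₂·m)₁α(h₁)`. -/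
noncomputable def eq52rhs (D : HopfQuasigroupData k H) (α : H →ₗ[k] H)
    (act : H ⊗[k] M →ₗ[k] M) (coact : M →ₗ[k] M ⊗[k] H) : H ⊗[k] M →ₗ[k] M ⊗[k] H :=
  (D.mul ∘ₗ α.lTensor H).lTensor M ∘ₗ (TensorProduct.assoc k M H H).toLinearMap ∘ₗ
    coact.rTensor H ∘ₗ (TensorProduct.comm k H M).toLinearMap ∘ₗ act.lTensor H ∘ₗ
      (TensorProduct.assoc k H H M).toLinearMap ∘ₗ D.comul.rTensor M

section HopfLemmas

variable {k H : Type*} [Field k] [AddCommGroup H] [Module k H]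

namespace YDAux

/-- a fixed choice of finite representation of `Δ x` -/
noncomputable def rp (D : HopfQuasigroupData k H) (x : H) : Finset (H × H) :=
  (TensorProduct.exists_finset (D.comul x)).choose

lemma rp_spec (D : HopfQuasigroupData k H) (x : H) :
    D.comul x = ∑ p ∈ rp D x, p.1 ⊗ₜ[k] p.2 :=
  (TensorProduct.exists_finset (D.comul x)).choose_spec

/-- left multiplication by `a` -/
noncomputable def lm (D : HopfQuasigroupData k H) (a : H) : H →ₗ[k] H :=
  D.mul ∘ₗ TensorProduct.mk k H H a

@[simp] lemma lm_apply (D : HopfQuasigroupData k H) (a x : H) :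
    lm D a x = D.mul (a ⊗ₜ[k] x) := rfl

/-- right multiplication by `a` -/
noncomputable def rm (D : HopfQuasigroupData k H) (a : H) : H →ₗ[k] H :=
  D.mul ∘ₗ (TensorProduct.mk k H H).flip a

@[simp] lemma rm_apply (D : HopfQuasigroupData k H) (a x : H) :
    rm D a x = D.mul (x ⊗ₜ[k] a) := rfl

/-- componentwise multiplication of `H ⊗ H` -/
noncomputable def mulK (D : HopfQuasigroupData k H) :
    (H ⊗[k] H) ⊗[k] (H ⊗[k] H) →ₗ[k] H ⊗[k] H :=
  TensorProduct.map D.mul D.mul ∘ₗ (TensorProduct.tensorTensorTensorComm k H H H H).toLinearMap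

@[simp] lemma mulK_tmul (D : HopfQuasigroupData k H) (x y u v : H) :
    mulK D ((x ⊗ₜ[k] y) ⊗ₜ[k] (u ⊗ₜ[k] v)) = D.mul (x ⊗ₜ[k] u) ⊗ₜ[k] D.mul (y ⊗ₜ[k] v) := by
  simp [mulK]

variable {D : HopfQuasigroupData k H}

lemma counit_left_p {ι : Type*} {g : H} {s : Finset ι} {a b : ι → H}
    (hg : D.comul g = ∑ i ∈ s, a i ⊗ₜ[k] b i) :
    ∑ i ∈ s, D.counit (a i) • b i = g := by
  have h := LinearMap.congr_fun D.counit_comul g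
  rw [LinearMap.comp_apply, LinearMap.comp_apply, hg] at h
  simpa [map_sum] using h

lemma counit_right_p {ι : Type*} {g : H} {s : Finset ι} {a b : ι → H}
    (hg : D.comul g = ∑ i ∈ s, a i ⊗ₜ[k] b i) :
    ∑ i ∈ s, D.counit (b i) • a i = g := by
  have h := LinearMap.congr_fun D.comul_counit g
  rw [LinearMap.comp_apply, LinearMap.comp_apply, hg] at h
  simpa [map_sum] using h

lemma A1p {S : H →ₗ[k] H} (hS : D.IsAntipode S) {ι : Type*} {g : H} {s : Finset ι}
    {a b : ι → H} (hg : D.comul g = ∑ i ∈ s, a i ⊗ₜ[k] b i) (x : H) :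
    ∑ i ∈ s, D.mul (S (a i) ⊗ₜ[k] D.mul (b i ⊗ₜ[k] x)) = D.counit g • x := by
  have h := LinearMap.congr_fun hS.1 (g ⊗ₜ[k] x)
  rw [HopfQuasigroupData.εl] at h
  simp only [LinearMap.comp_apply, LinearMap.rTensor_tmul, hg, TensorProduct.sum_tmul,
    map_sum, LinearEquiv.coe_coe, TensorProduct.assoc_tmul, TensorProduct.map_tmul,
    TensorProduct.lid_tmul] at h
  exact h

lemma A3p {S : H →ₗ[k] H} (hS : D.IsAntipode S) {ι : Type*} {g : H} {s : Finset ι}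
    {a b : ι → H} (hg : D.comul g = ∑ i ∈ s, a i ⊗ₜ[k] b i) (x : H) :
    ∑ i ∈ s, D.mul (D.mul (x ⊗ₜ[k] S (a i)) ⊗ₜ[k] b i) = D.counit g • x := by
  have h := LinearMap.congr_fun hS.2.2.1 (x ⊗ₜ[k] g)
  rw [HopfQuasigroupData.εr] at h
  simp only [LinearMap.comp_apply, LinearMap.lTensor_tmul, hg, TensorProduct.tmul_sum,
    map_sum, LinearEquiv.coe_coe, TensorProduct.assoc_symm_tmul, TensorProduct.map_tmul,
    TensorProduct.rid_tmul, LinearMap.id_coe, id_eq] at h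
  exact h

lemma A4p {S : H →ₗ[k] H} (hS : D.IsAntipode S) {ι : Type*} {g : H} {s : Finset ι}
    {a b : ι → H} (hg : D.comul g = ∑ i ∈ s, a i ⊗ₜ[k] b i) (x : H) :
    ∑ i ∈ s, D.mul (D.mul (x ⊗ₜ[k] a i) ⊗ₜ[k] S (b i)) = D.counit g • x := by
  have h := LinearMap.congr_fun hS.2.2.2 (x ⊗ₜ[k] g)
  rw [HopfQuasigroupData.εr] at h
  simp only [LinearMap.comp_apply, LinearMap.lTensor_tmul, hg, TensorProduct.tmul_sum,
    map_sum, LinearEquiv.coe_coe, TensorProduct.assoc_symm_tmul, TensorProduct.map_tmul,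
    TensorProduct.rid_tmul] at h
  exact h

lemma oneS_p {S : H →ₗ[k] H} (hS : D.IsAntipode S) {ι : Type*} {g : H} {s : Finset ι}
    {a b : ι → H} (hg : D.comul g = ∑ i ∈ s, a i ⊗ₜ[k] b i) :
    ∑ i ∈ s, D.mul (a i ⊗ₜ[k] S (b i)) = D.counit g • D.one := by
  have h := A4p hS hg D.one
  simpa [D.one_mul] using h

lemma epsS_p {S : H →ₗ[k] H} (hS : D.IsAntipode S) (g : H) :
    D.counit (S g) = D.counit g := by
  have hg := rp_spec D g
  have h1 := A1p hS hg D.one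
  simp only [D.mul_one] at h1
  have h2 := congrArg D.counit h1
  rw [map_sum, map_smul, D.counit_one, smul_eq_mul, mul_one] at h2
  have h3 : ∀ p ∈ rp D g, D.counit (D.mul (S p.1 ⊗ₜ[k] p.2))
      = D.counit p.2 • D.counit (S p.1) := by
    intro p _
    rw [D.counit_mul, smul_eq_mul, mul_comm]
  rw [Finset.sum_congr rfl h3] at h2
  calc D.counit (S g) = D.counit (S (∑ p ∈ rp D g, D.counit p.2 • p.1)) := by
        rw [counit_right_p hg]
    _ = D.counit g := by rw [map_sum, map_sum] at *; simpa [map_smul] using h2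

end YDAux
end HopfLemmas

section HopfLemmas2
variable {k H : Type*} [Field k] [AddCommGroup H] [Module k H]
namespace YDAux
variable {D : HopfQuasigroupData k H}

lemma mulK_comul (x y : H) :
    D.comul (D.mul (x ⊗ₜ[k] y)) = mulK D (D.comul x ⊗ₜ[k] D.comul y) := by
  have h := LinearMap.congr_fun D.comul_mul (x ⊗ₜ[k] y)
  simpa [mulK, LinearMap.comp_apply] using h

lemma mulK_one (U : H ⊗[k] H) :
    mulK D (U ⊗ₜ[k] (D.one ⊗ₜ[k] D.one)) = U := by
  induction U using TensorProduct.induction_on with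
  | zero => simp
  | tmul x y => simp [D.mul_one]
  | add u v hu hv => rw [TensorProduct.add_tmul, map_add, hu, hv]

lemma coassoc_p {Z : Type*} [AddCommGroup Z] [Module k Z]
    (F : H ⊗[k] (H ⊗[k] H) →ₗ[k] Z) {g : H}
    {ι ι' ι'' : Type*} {s : Finset ι} {a b : ι → H}
    (hg : D.comul g = ∑ i ∈ s, a i ⊗ₜ[k] b i)
    {t : ι → Finset ι'} {c d : ι → ι' → H}
    (hb : ∀ i ∈ s, D.comul (b i) = ∑ j ∈ t i, c i j ⊗ₜ[k] d i j)
    {r : ι → Finset ι''} {p q : ι → ι'' → H}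
    (ha : ∀ i ∈ s, D.comul (a i) = ∑ j ∈ r i, p i j ⊗ₜ[k] q i j) :
    ∑ i ∈ s, ∑ j ∈ t i, F (a i ⊗ₜ[k] (c i j ⊗ₜ[k] d i j))
      = ∑ i ∈ s, ∑ j ∈ r i, F (p i j ⊗ₜ[k] (q i j ⊗ₜ[k] b i)) := by
  have h := congrArg F (LinearMap.congr_fun D.coassoc g)
  simp only [LinearMap.comp_apply] at h
  have hL : F ((D.comul.lTensor H) (D.comul g))
      = ∑ i ∈ s, ∑ j ∈ t i, F (a i ⊗ₜ[k] (c i j ⊗ₜ[k] d i j)) := by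
    rw [hg, map_sum, map_sum]
    refine Finset.sum_congr rfl fun i hi => ?_
    rw [LinearMap.lTensor_tmul, hb i hi, TensorProduct.tmul_sum, map_sum]
  have hR : F ((TensorProduct.assoc k H H H).toLinearMap ((D.comul.rTensor H) (D.comul g)))
      = ∑ i ∈ s, ∑ j ∈ r i, F (p i j ⊗ₜ[k] (q i j ⊗ₜ[k] b i)) := by
    rw [hg, map_sum]
    simp only [LinearMap.rTensor_tmul]
    rw [map_sum, map_sum]
    refine Finset.sum_congr rfl fun i hi => ?_
    rw [ha i hi, TensorProduct.sum_tmul, map_sum, map_sum]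
    refine Finset.sum_congr rfl fun j hj => ?_
    simp only [LinearEquiv.coe_coe, TensorProduct.assoc_tmul]
  rw [← hL, ← hR, h]

/-- `y ⊗ V ↦ Δ(y) · V` (componentwise product in `H ⊗ H`). -/
noncomputable def Lc (D : HopfQuasigroupData k H) : H ⊗[k] (H ⊗[k] H) →ₗ[k] H ⊗[k] H :=
  mulK D ∘ₗ D.comul.rTensor (H ⊗[k] H)

lemma Lc_tmul (y : H) (V : H ⊗[k] H) :
    Lc D (y ⊗ₜ[k] V) = mulK D (D.comul y ⊗ₜ[k] V) := by
  simp [Lc]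

/-- `x ↦ Σ S(x₂) ⊗ S(x₁)` -/
noncomputable def Tm (D : HopfQuasigroupData k H) (S : H →ₗ[k] H) : H →ₗ[k] H ⊗[k] H :=
  (TensorProduct.comm k H H).toLinearMap ∘ₗ TensorProduct.map S S ∘ₗ D.comul

lemma Tm_p (S : H →ₗ[k] H) {ι : Type*} {g : H} {s : Finset ι} {a b : ι → H}
    (hg : D.comul g = ∑ i ∈ s, a i ⊗ₜ[k] b i) :
    Tm D S g = ∑ i ∈ s, S (b i) ⊗ₜ[k] S (a i) := by
  simp [Tm, hg, map_sum]

/-- `x ⊗ V ↦ T(x) · V` -/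
noncomputable def Lt (D : HopfQuasigroupData k H) (S : H →ₗ[k] H) :
    H ⊗[k] (H ⊗[k] H) →ₗ[k] H ⊗[k] H :=
  mulK D ∘ₗ (Tm D S).rTensor (H ⊗[k] H)

lemma Lt_tmul (S : H →ₗ[k] H) (x : H) (V : H ⊗[k] H) :
    Lt D S (x ⊗ₜ[k] V) = mulK D (Tm D S x ⊗ₜ[k] V) := by
  simp [Lt]

/-- `a ⊗ V ↦ Σ T(a₁)·(Δ(a₂)·V)` -/
noncomputable def Ga (D : HopfQuasigroupData k H) (S : H →ₗ[k] H) :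
    H ⊗[k] (H ⊗[k] H) →ₗ[k] H ⊗[k] H :=
  Lt D S ∘ₗ (Lc D).lTensor H ∘ₗ (TensorProduct.assoc k H H (H ⊗[k] H)).toLinearMap ∘ₗ
    D.comul.rTensor (H ⊗[k] H)

lemma Ga_tmul (S : H →ₗ[k] H) {ι : Type*} {g : H} {s : Finset ι} {a b : ι → H}
    (hg : D.comul g = ∑ i ∈ s, a i ⊗ₜ[k] b i) (V : H ⊗[k] H) :
    Ga D S (g ⊗ₜ[k] V) = ∑ i ∈ s, Lt D S (a i ⊗ₜ[k] Lc D (b i ⊗ₜ[k] V)) := by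
  simp only [Ga, LinearMap.comp_apply, LinearMap.rTensor_tmul, hg,
    TensorProduct.sum_tmul, map_sum, LinearEquiv.coe_coe, TensorProduct.assoc_tmul,
    LinearMap.lTensor_tmul]

end YDAux
end HopfLemmas2

section HopfLemmas3
variable {k H : Type*} [Field k] [AddCommGroup H] [Module k H]
namespace YDAux
variable {D : HopfQuasigroupData k H}

lemma Ga_eq {S : H →ₗ[k] H} (hS : D.IsAntipode S) (g : H) (V : H ⊗[k] H) :
    Ga D S (g ⊗ₜ[k] V) = D.counit g • V := by
  induction V using TensorProduct.induction_on with
  | zero => simp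
  | add u v hu hv => rw [TensorProduct.tmul_add, map_add, hu, hv, smul_add]
  | tmul u v =>
    rw [Ga_tmul S (rp_spec D g)]
    set χ : H →ₗ[k] H ⊗[k] H :=
      Lc D ∘ₗ (TensorProduct.mk k H (H ⊗[k] H)).flip (u ⊗ₜ[k] v) with hχ
    have hχt : ∀ q : H, χ q = mulK D (D.comul q ⊗ₜ[k] (u ⊗ₜ[k] v)) := by
      intro q; simp [hχ, Lc_tmul]
    set F₂ : H ⊗[k] (H ⊗[k] H) →ₗ[k] H ⊗[k] H :=
      mulK D ∘ₗ LinearMap.rTensor (H ⊗[k] H) (TensorProduct.comm k H H).toLinearMap ∘ₗ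
        (TensorProduct.assoc k H H (H ⊗[k] H)).symm.toLinearMap ∘ₗ
          TensorProduct.map S (TensorProduct.map S χ) with hF₂
    have hF₂t : ∀ x y q : H, F₂ (x ⊗ₜ[k] (y ⊗ₜ[k] q))
        = mulK D ((S y ⊗ₜ[k] S x) ⊗ₜ[k] χ q) := by
      intro x y q
      simp [hF₂]
    have step1 : ∀ z : H × H, Lt D S (z.1 ⊗ₜ[k] Lc D (z.2 ⊗ₜ[k] (u ⊗ₜ[k] v)))
        = ∑ w ∈ rp D z.1, F₂ (w.1 ⊗ₜ[k] (w.2 ⊗ₜ[k] z.2)) := by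
      intro z
      rw [Lt_tmul, Tm_p S (rp_spec D z.1), TensorProduct.sum_tmul, map_sum]
      refine Finset.sum_congr rfl fun w _ => ?_
      rw [hF₂t, hχt, Lc_tmul]
    have step2 := (coassoc_p (D := D) F₂ (rp_spec D g)
      (t := fun z => rp D z.2) (c := fun _ p => p.1) (d := fun _ p => p.2)
      (fun z _ => rp_spec D z.2)
      (r := fun z => rp D z.1) (p := fun _ w => w.1) (q := fun _ w => w.2)
      (fun z _ => rp_spec D z.1)).symm
    have step3 : ∀ z : H × H, z ∈ rp D g →
        ∑ w ∈ rp D z.2, F₂ (z.1 ⊗ₜ[k] (w.1 ⊗ₜ[k] w.2))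
          = u ⊗ₜ[k] D.mul (S z.1 ⊗ₜ[k] D.mul (z.2 ⊗ₜ[k] v)) := by
      intro z _
      set F₃ : H ⊗[k] (H ⊗[k] H) →ₗ[k] H ⊗[k] H :=
        TensorProduct.map D.mul (lm D (S z.1)) ∘ₗ
          (TensorProduct.assoc k H H H).symm.toLinearMap ∘ₗ
            TensorProduct.map S (TensorProduct.map (rm D u) (rm D v)) with hF₃
      have hF₃t : ∀ x y q : H, F₃ (x ⊗ₜ[k] (y ⊗ₜ[k] q))
          = D.mul (S x ⊗ₜ[k] D.mul (y ⊗ₜ[k] u)) ⊗ₜ[k] D.mul (S z.1 ⊗ₜ[k] D.mul (q ⊗ₜ[k] v)) := by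
        intro x y q; simp [hF₃]
      have e1 : ∀ w : H × H, F₂ (z.1 ⊗ₜ[k] (w.1 ⊗ₜ[k] w.2))
          = ∑ y ∈ rp D w.2, F₃ (w.1 ⊗ₜ[k] (y.1 ⊗ₜ[k] y.2)) := by
        intro w
        rw [hF₂t, hχt, rp_spec D w.2, TensorProduct.sum_tmul, map_sum,
          TensorProduct.tmul_sum, map_sum]
        refine Finset.sum_congr rfl fun y _ => ?_
        rw [mulK_tmul, mulK_tmul, hF₃t]
      rw [Finset.sum_congr rfl (fun w _ => e1 w)]
      rw [coassoc_p (D := D) F₃ (rp_spec D z.2)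
        (t := fun w => rp D w.2) (c := fun _ p => p.1) (d := fun _ p => p.2)
        (fun w _ => rp_spec D w.2)
        (r := fun w => rp D w.1) (p := fun _ y => y.1) (q := fun _ y => y.2)
        (fun w _ => rp_spec D w.1)]
      have e2 : ∀ w : H × H, w ∈ rp D z.2 →
          ∑ y ∈ rp D w.1, F₃ (y.1 ⊗ₜ[k] (y.2 ⊗ₜ[k] w.2))
            = D.counit w.1 • (u ⊗ₜ[k] D.mul (S z.1 ⊗ₜ[k] D.mul (w.2 ⊗ₜ[k] v))) := by
        intro w _
        have : ∑ y ∈ rp D w.1, F₃ (y.1 ⊗ₜ[k] (y.2 ⊗ₜ[k] w.2))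
            = (∑ y ∈ rp D w.1, D.mul (S y.1 ⊗ₜ[k] D.mul (y.2 ⊗ₜ[k] u)))
                ⊗ₜ[k] D.mul (S z.1 ⊗ₜ[k] D.mul (w.2 ⊗ₜ[k] v)) := by
          rw [TensorProduct.sum_tmul]
          exact Finset.sum_congr rfl fun y _ => hF₃t y.1 y.2 w.2
        rw [this, A1p hS (rp_spec D w.1) u, TensorProduct.smul_tmul']
      rw [Finset.sum_congr rfl e2]
      have e3 : ∑ w ∈ rp D z.2,
          D.counit w.1 • (u ⊗ₜ[k] D.mul (S z.1 ⊗ₜ[k] D.mul (w.2 ⊗ₜ[k] v)))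
          = u ⊗ₜ[k] D.mul (S z.1 ⊗ₜ[k] D.mul ((∑ w ∈ rp D z.2, D.counit w.1 • w.2) ⊗ₜ[k] v)) := by
        rw [TensorProduct.sum_tmul, map_sum, TensorProduct.tmul_sum, map_sum,
          TensorProduct.tmul_sum]
        refine Finset.sum_congr rfl fun w _ => ?_
        simp only [← TensorProduct.smul_tmul', map_smul, TensorProduct.tmul_smul]
      rw [e3, counit_left_p (rp_spec D z.2)]
    rw [Finset.sum_congr rfl (fun z _ => step1 z), step2, Finset.sum_congr rfl step3]
    rw [← TensorProduct.tmul_sum, A1p hS (rp_spec D g) v, TensorProduct.tmul_smul]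

lemma anticomul {S : H →ₗ[k] H} (hS : D.IsAntipode S) : D.comul ∘ₗ S = Tm D S := by
  refine LinearMap.ext fun g => ?_
  set Φ : H ⊗[k] (H ⊗[k] H) →ₗ[k] H ⊗[k] H :=
    Lt D S ∘ₗ (Lc D ∘ₗ (D.comul ∘ₗ S).lTensor H).lTensor H with hΦ
  have hΦt : ∀ x y q : H, Φ (x ⊗ₜ[k] (y ⊗ₜ[k] q))
      = Lt D S (x ⊗ₜ[k] Lc D (y ⊗ₜ[k] D.comul (S q))) := by
    intro x y q; simp [hΦ]
  have hE := congrArg Φ (LinearMap.congr_fun D.coassoc g)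
  simp only [LinearMap.comp_apply] at hE
  have routeB : Φ ((TensorProduct.assoc k H H H).toLinearMap ((D.comul.rTensor H) (D.comul g)))
      = D.comul (S g) := by
    rw [rp_spec D g, map_sum]
    simp only [LinearMap.rTensor_tmul]
    rw [map_sum, map_sum]
    have key : ∀ z : H × H, z ∈ rp D g →
        Φ ((TensorProduct.assoc k H H H).toLinearMap (D.comul z.1 ⊗ₜ[k] z.2))
        = D.counit z.1 • D.comul (S z.2) := by
      intro z _
      rw [rp_spec D z.1, TensorProduct.sum_tmul, map_sum, map_sum]
      have e : ∀ w : H × H,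
          Φ ((TensorProduct.assoc k H H H).toLinearMap ((w.1 ⊗ₜ[k] w.2) ⊗ₜ[k] z.2))
          = Lt D S (w.1 ⊗ₜ[k] Lc D (w.2 ⊗ₜ[k] D.comul (S z.2))) := by
        intro w
        simp only [LinearEquiv.coe_coe, TensorProduct.assoc_tmul]
        exact hΦt w.1 w.2 z.2
      rw [Finset.sum_congr rfl (fun w _ => e w), ← Ga_tmul S (rp_spec D z.1),
        Ga_eq hS]
    rw [Finset.sum_congr rfl key]
    have : ∑ z ∈ rp D g, D.counit z.1 • D.comul (S z.2)
        = D.comul (S (∑ z ∈ rp D g, D.counit z.1 • z.2)) := by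
      rw [map_sum, map_sum]
      exact Finset.sum_congr rfl fun z _ => by rw [map_smul, map_smul]
    rw [this, counit_left_p (rp_spec D g)]
  have routeA : Φ ((D.comul.lTensor H) (D.comul g)) = Tm D S g := by
    rw [rp_spec D g, map_sum, map_sum]
    have key : ∀ z : H × H, z ∈ rp D g →
        Φ ((D.comul.lTensor H) (z.1 ⊗ₜ[k] z.2)) = D.counit z.2 • Tm D S z.1 := by
      intro z _
      rw [LinearMap.lTensor_tmul, rp_spec D z.2, TensorProduct.tmul_sum, map_sum]
      have e : ∀ w : H × H, Φ (z.1 ⊗ₜ[k] (w.1 ⊗ₜ[k] w.2))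
          = Lt D S (z.1 ⊗ₜ[k] D.comul (D.mul (w.1 ⊗ₜ[k] S w.2))) := by
        intro w
        rw [hΦt, Lc_tmul, ← mulK_comul]
      rw [Finset.sum_congr rfl (fun w _ => e w)]
      have e2 : (∑ w ∈ rp D z.2, Lt D S (z.1 ⊗ₜ[k] D.comul (D.mul (w.1 ⊗ₜ[k] S w.2))))
          = Lt D S (z.1 ⊗ₜ[k] D.comul (∑ w ∈ rp D z.2, D.mul (w.1 ⊗ₜ[k] S w.2))) := by
        rw [map_sum, TensorProduct.tmul_sum, map_sum]
      rw [e2, oneS_p hS (rp_spec D z.2), map_smul, D.comul_one, TensorProduct.tmul_smul,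
        map_smul, Lt_tmul, mulK_one]
    rw [Finset.sum_congr rfl key]
    have : ∑ z ∈ rp D g, D.counit z.2 • Tm D S z.1
        = Tm D S (∑ z ∈ rp D g, D.counit z.2 • z.1) := by
      rw [map_sum]
      exact Finset.sum_congr rfl fun z _ => by rw [map_smul]
    rw [this, counit_right_p (rp_spec D g)]
  rw [LinearMap.comp_apply, ← routeB, hE, routeA]

lemma anticomul_p {S : H →ₗ[k] H} (hS : D.IsAntipode S) {ι : Type*} {g : H}
    {s : Finset ι} {a b : ι → H} (hg : D.comul g = ∑ i ∈ s, a i ⊗ₜ[k] b i) :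
    D.comul (S g) = ∑ i ∈ s, S (b i) ⊗ₜ[k] S (a i) := by
  have := LinearMap.congr_fun (anticomul hS) g
  rw [LinearMap.comp_apply] at this
  rw [this, Tm_p S hg]

end YDAux
end HopfLemmas3

section HopfLemmas4
variable {k H : Type*} [Field k] [AddCommGroup H] [Module k H]
namespace YDAux
variable {D : HopfQuasigroupData k H}

/-- `Σ (x·y₂)·S⁻¹(y₁) = ε(y) x` -/
lemma I2p {S Sinv : H →ₗ[k] H} (hS : D.IsAntipode S)
    (hSinv₁ : S ∘ₗ Sinv = LinearMap.id) (hSinv₂ : Sinv ∘ₗ S = LinearMap.id)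
    (x y : H) {ι : Type*} {s : Finset ι} {A B : ι → H}
    (hy : D.comul y = ∑ i ∈ s, A i ⊗ₜ[k] B i) :
    ∑ i ∈ s, D.mul (D.mul (x ⊗ₜ[k] B i) ⊗ₜ[k] Sinv (A i)) = D.counit y • x := by
  set ξ : H ⊗[k] H →ₗ[k] H :=
    D.mul ∘ₗ (TensorProduct.comm k H H).toLinearMap ∘ₗ TensorProduct.map Sinv (lm D x)
      with hξ
  have hξt : ∀ A B : H, ξ (A ⊗ₜ[k] B) = D.mul (D.mul (x ⊗ₜ[k] B) ⊗ₜ[k] Sinv A) := by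
    intro A B; simp [hξ]
  have hL : ∑ i ∈ s, D.mul (D.mul (x ⊗ₜ[k] B i) ⊗ₜ[k] Sinv (A i)) = ξ (D.comul y) := by
    rw [hy, map_sum]
    exact (Finset.sum_congr rfl fun i _ => (hξt (A i) (B i)).symm)
  have hw : y = S (Sinv y) := (LinearMap.congr_fun hSinv₁ y).symm
  have hrep := anticomul_p hS (rp_spec D (Sinv y))
  rw [hL, hw, hrep, map_sum]
  have : ∀ z : H × H, z ∈ rp D (Sinv y) →
      ξ (S z.2 ⊗ₜ[k] S z.1) = D.mul (D.mul (x ⊗ₜ[k] S z.1) ⊗ₜ[k] z.2) := by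
    intro z _
    rw [hξt]
    congr 2
    exact LinearMap.congr_fun hSinv₂ z.2
  rw [Finset.sum_congr rfl this, A3p hS (rp_spec D (Sinv y)), epsS_p hS]

/-- `Σ (x·S⁻¹(y₂))·y₁ = ε(y) x` -/
lemma I1p {S Sinv : H →ₗ[k] H} (hS : D.IsAntipode S)
    (hSinv₁ : S ∘ₗ Sinv = LinearMap.id) (hSinv₂ : Sinv ∘ₗ S = LinearMap.id)
    (x y : H) {ι : Type*} {s : Finset ι} {A B : ι → H}
    (hy : D.comul y = ∑ i ∈ s, A i ⊗ₜ[k] B i) :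
    ∑ i ∈ s, D.mul (D.mul (x ⊗ₜ[k] Sinv (B i)) ⊗ₜ[k] A i) = D.counit y • x := by
  set ξ : H ⊗[k] H →ₗ[k] H :=
    D.mul ∘ₗ (TensorProduct.comm k H H).toLinearMap ∘ₗ
      TensorProduct.map LinearMap.id (lm D x ∘ₗ Sinv) with hξ
  have hξt : ∀ A B : H, ξ (A ⊗ₜ[k] B) = D.mul (D.mul (x ⊗ₜ[k] Sinv B) ⊗ₜ[k] A) := by
    intro A B; simp [hξ]
  have hL : ∑ i ∈ s, D.mul (D.mul (x ⊗ₜ[k] Sinv (B i)) ⊗ₜ[k] A i) = ξ (D.comul y) := by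
    rw [hy, map_sum]
    exact (Finset.sum_congr rfl fun i _ => (hξt (A i) (B i)).symm)
  have hw : y = S (Sinv y) := (LinearMap.congr_fun hSinv₁ y).symm
  have hrep := anticomul_p hS (rp_spec D (Sinv y))
  rw [hL, hw, hrep, map_sum]
  have : ∀ z : H × H, z ∈ rp D (Sinv y) →
      ξ (S z.2 ⊗ₜ[k] S z.1) = D.mul (D.mul (x ⊗ₜ[k] z.1) ⊗ₜ[k] S z.2) := by
    intro z _
    rw [hξt]
    have h2 : Sinv (S z.1) = z.1 := LinearMap.congr_fun hSinv₂ z.1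
    rw [h2]
  rw [Finset.sum_congr rfl this, A4p hS (rp_spec D (Sinv y)), epsS_p hS]

end YDAux
end HopfLemmas4

section MainSection
open YDAux
variable {k H M : Type*} [Field k] [AddCommGroup H] [Module k H]
  [AddCommGroup M] [Module k M]

namespace YDAux

/-- convolution twisting of a map `H ⊗ M → M ⊗ H` by `γ`:
`h ⊗ m ↦ Σ F(h₂ ⊗ m) ·₂ γ(h₁)`. -/
noncomputable def conv (D : HopfQuasigroupData k H) (γ : H →ₗ[k] H)
    (F : H ⊗[k] M →ₗ[k] M ⊗[k] H) : H ⊗[k] M →ₗ[k] M ⊗[k] H :=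
  LinearMap.lTensor M D.mul ∘ₗ (TensorProduct.assoc k M H H).toLinearMap ∘ₗ
    (TensorProduct.comm k H (M ⊗[k] H)).toLinearMap ∘ₗ TensorProduct.map γ F ∘ₗ
      (TensorProduct.assoc k H H M).toLinearMap ∘ₗ LinearMap.rTensor M D.comul

lemma tailA (D : HopfQuasigroupData k H) (g : H) (X : M ⊗[k] H) :
    LinearMap.lTensor M D.mul ((TensorProduct.assoc k M H H)
      ((TensorProduct.comm k H (M ⊗[k] H)) (g ⊗ₜ[k] X)))
    = LinearMap.lTensor M (rm D g) X := by
  induction X using TensorProduct.induction_on with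
  | zero => simp
  | tmul n w => simp
  | add X Y hX hY => simp only [TensorProduct.tmul_add, map_add, hX, hY]

lemma conv_tmul (D : HopfQuasigroupData k H) (γ : H →ₗ[k] H)
    (F : H ⊗[k] M →ₗ[k] M ⊗[k] H) {h : H} {ι : Type*} {s : Finset ι} {a b : ι → H}
    (hg : D.comul h = ∑ i ∈ s, a i ⊗ₜ[k] b i) (m : M) :
    conv D γ F (h ⊗ₜ[k] m)
      = ∑ i ∈ s, LinearMap.lTensor M (rm D (γ (a i))) (F (b i ⊗ₜ[k] m)) := by
  simp only [conv, LinearMap.comp_apply, LinearMap.rTensor_tmul, hg,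
    TensorProduct.sum_tmul, map_sum, LinearEquiv.coe_coe, TensorProduct.assoc_tmul,
    TensorProduct.map_tmul]
  exact Finset.sum_congr rfl fun i _ => tailA D (γ (a i)) (F (b i ⊗ₜ[k] m))

lemma convK (D : HopfQuasigroupData k H) (γ γ' : H →ₗ[k] H)
    (hP : ∀ (g x : H),
      ∑ z ∈ rp D g, D.mul (D.mul (x ⊗ₜ[k] γ z.2) ⊗ₜ[k] γ' z.1) = D.counit g • x)
    (G : H ⊗[k] M →ₗ[k] M ⊗[k] H) : conv D γ' (conv D γ G) = G := by
  apply TensorProduct.ext'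
  intro h m
  rw [conv_tmul D γ' (conv D γ G) (rp_spec D h) m]
  have e1 : ∀ z : H × H, z ∈ rp D h →
      LinearMap.lTensor M (rm D (γ' z.1)) (conv D γ G (z.2 ⊗ₜ[k] m))
      = ∑ w ∈ rp D z.2, LinearMap.lTensor M (rm D (γ' z.1))
          (LinearMap.lTensor M (rm D (γ w.1)) (G (w.2 ⊗ₜ[k] m))) := by
    intro z _; rw [conv_tmul D γ G (rp_spec D z.2) m, map_sum]
  rw [Finset.sum_congr rfl e1]
  -- transport via coassociativity
  set Gm : H →ₗ[k] M ⊗[k] H := G ∘ₗ (TensorProduct.mk k H M).flip m with hGm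
  set step : (M ⊗[k] H) ⊗[k] H →ₗ[k] M ⊗[k] H :=
    LinearMap.lTensor M D.mul ∘ₗ (TensorProduct.assoc k M H H).toLinearMap with hstep
  have step_t : ∀ (X : M ⊗[k] H) (g : H),
      step (X ⊗ₜ[k] g) = LinearMap.lTensor M (rm D g) X := by
    intro X g
    induction X using TensorProduct.induction_on with
    | zero => simp [hstep]
    | tmul n w => simp [hstep]
    | add X Y hX hY => rw [TensorProduct.add_tmul, map_add, hX, hY, map_add]
  set F₄ : H ⊗[k] (H ⊗[k] H) →ₗ[k] M ⊗[k] H :=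
    step ∘ₗ LinearMap.rTensor H step ∘ₗ
      LinearMap.rTensor H (TensorProduct.comm k H (M ⊗[k] H)).toLinearMap ∘ₗ
        (TensorProduct.comm k H (H ⊗[k] (M ⊗[k] H))).toLinearMap ∘ₗ
          TensorProduct.map γ' (TensorProduct.map γ Gm) with hF₄
  have hF₄t : ∀ x y q : H, F₄ (x ⊗ₜ[k] (y ⊗ₜ[k] q))
      = LinearMap.lTensor M (rm D (γ' x))
          (LinearMap.lTensor M (rm D (γ y)) (G (q ⊗ₜ[k] m))) := by
    intro x y q
    simp only [hF₄, LinearMap.comp_apply, TensorProduct.map_tmul, LinearEquiv.coe_coe,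
      TensorProduct.comm_tmul, LinearMap.rTensor_tmul, step_t, hGm,
      LinearMap.flip_apply, TensorProduct.mk_apply]
  have trans1 : ∑ z ∈ rp D h, ∑ w ∈ rp D z.2, LinearMap.lTensor M (rm D (γ' z.1))
        (LinearMap.lTensor M (rm D (γ w.1)) (G (w.2 ⊗ₜ[k] m)))
      = ∑ z ∈ rp D h, ∑ w ∈ rp D z.1, LinearMap.lTensor M (rm D (γ' w.1))
        (LinearMap.lTensor M (rm D (γ w.2)) (G (z.2 ⊗ₜ[k] m))) := by
    have := coassoc_p (D := D) F₄ (rp_spec D h)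
      (t := fun z => rp D z.2) (c := fun _ p => p.1) (d := fun _ p => p.2)
      (fun z _ => rp_spec D z.2)
      (r := fun z => rp D z.1) (p := fun _ w => w.1) (q := fun _ w => w.2)
      (fun z _ => rp_spec D z.1)
    calc ∑ z ∈ rp D h, ∑ w ∈ rp D z.2, LinearMap.lTensor M (rm D (γ' z.1))
          (LinearMap.lTensor M (rm D (γ w.1)) (G (w.2 ⊗ₜ[k] m)))
        = ∑ z ∈ rp D h, ∑ w ∈ rp D z.2, F₄ (z.1 ⊗ₜ[k] (w.1 ⊗ₜ[k] w.2)) := by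
          exact Finset.sum_congr rfl fun z _ => Finset.sum_congr rfl fun w _ =>
            (hF₄t z.1 w.1 w.2).symm
      _ = ∑ z ∈ rp D h, ∑ w ∈ rp D z.1, F₄ (w.1 ⊗ₜ[k] (w.2 ⊗ₜ[k] z.2)) := this
      _ = _ := Finset.sum_congr rfl fun z _ => Finset.sum_congr rfl fun w _ =>
            hF₄t w.1 w.2 z.2
  rw [trans1]
  have e2 : ∀ z : H × H, z ∈ rp D h →
      ∑ w ∈ rp D z.1, LinearMap.lTensor M (rm D (γ' w.1))
        (LinearMap.lTensor M (rm D (γ w.2)) (G (z.2 ⊗ₜ[k] m)))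
      = D.counit z.1 • G (z.2 ⊗ₜ[k] m) := by
    intro z _
    induction G (z.2 ⊗ₜ[k] m) using TensorProduct.induction_on with
    | zero => simp
    | tmul n w' =>
      simp only [LinearMap.lTensor_tmul, rm_apply]
      rw [← TensorProduct.tmul_sum, hP z.1 w', TensorProduct.tmul_smul]
    | add X Y hX hY =>
      simp only [map_add, smul_add, Finset.sum_add_distrib, hX, hY]
  rw [Finset.sum_congr rfl e2]
  have e3 : ∑ z ∈ rp D h, D.counit z.1 • G (z.2 ⊗ₜ[k] m)
      = G ((∑ z ∈ rp D h, D.counit z.1 • z.2) ⊗ₜ[k] m) := by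
    rw [TensorProduct.sum_tmul, map_sum]
    exact Finset.sum_congr rfl fun z _ => by
      rw [← TensorProduct.smul_tmul', map_smul]
  rw [e3, counit_left_p (rp_spec D h)]

end YDAux
end MainSection

section MainSection2
open YDAux
variable {k H M : Type*} [Field k] [AddCommGroup H] [Module k H]
  [AddCommGroup M] [Module k M]

namespace YDAux

lemma aut_Sinv_comm {D : HopfQuasigroupData k H} {S : H →ₗ[k] H}
    (α : HopfQuasigroupAut D S) {Sinv : H →ₗ[k] H}
    (hSinv₁ : S ∘ₗ Sinv = LinearMap.id) (hSinv₂ : Sinv ∘ₗ S = LinearMap.id) (x : H) :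
    α.lmap (Sinv x) = Sinv (α.lmap x) := by
  have hc : ∀ y, α.lmap (S y) = S (α.lmap y) := fun y => LinearMap.congr_fun α.comm_antipode y
  have h1' : ∀ y, S (Sinv y) = y := fun y => LinearMap.congr_fun hSinv₁ y
  have h2' : ∀ y, Sinv (S y) = y := fun y => LinearMap.congr_fun hSinv₂ y
  calc α.lmap (Sinv x) = Sinv (S (α.lmap (Sinv x))) := (h2' _).symm
    _ = Sinv (α.lmap (S (Sinv x))) := by rw [hc]
    _ = Sinv (α.lmap x) := by rw [h1']

lemma aut_comul_p {D : HopfQuasigroupData k H} {S : H →ₗ[k] H}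
    (α : HopfQuasigroupAut D S) (g : H) :
    D.comul (α.lmap g) = ∑ z ∈ rp D g, α.lmap z.1 ⊗ₜ[k] α.lmap z.2 := by
  have h := LinearMap.congr_fun α.map_comul g
  simp only [LinearMap.comp_apply] at h
  unfold HopfQuasigroupAut.lmap
  rw [h, rp_spec D g, map_sum]
  exact Finset.sum_congr rfl fun z _ => by rw [TensorProduct.map_tmul]

lemma P1 {D : HopfQuasigroupData k H} {S Sinv : H →ₗ[k] H} (hS : D.IsAntipode S)
    (hSinv₁ : S ∘ₗ Sinv = LinearMap.id) (hSinv₂ : Sinv ∘ₗ S = LinearMap.id)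
    (α : HopfQuasigroupAut D S) (g x : H) :
    ∑ z ∈ rp D g, D.mul (D.mul (x ⊗ₜ[k] α.lmap z.2) ⊗ₜ[k] (α.lmap ∘ₗ Sinv) z.1)
      = D.counit g • x := by
  have h := I2p hS hSinv₁ hSinv₂ x (α.lmap g)
    (A := fun z : H × H => α.lmap z.1) (B := fun z : H × H => α.lmap z.2)
    (aut_comul_p α g)
  have hε : D.counit (α.lmap g) = D.counit g := LinearMap.congr_fun α.map_counit g
  rw [hε] at h
  rw [← h]
  refine Finset.sum_congr rfl fun z _ => ?_
  rw [LinearMap.comp_apply, aut_Sinv_comm α hSinv₁ hSinv₂ z.1]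

lemma P2 {D : HopfQuasigroupData k H} {S Sinv : H →ₗ[k] H} (hS : D.IsAntipode S)
    (hSinv₁ : S ∘ₗ Sinv = LinearMap.id) (hSinv₂ : Sinv ∘ₗ S = LinearMap.id)
    (α : HopfQuasigroupAut D S) (g x : H) :
    ∑ z ∈ rp D g, D.mul (D.mul (x ⊗ₜ[k] (α.lmap ∘ₗ Sinv) z.2) ⊗ₜ[k] α.lmap z.1)
      = D.counit g • x := by
  have h := I1p hS hSinv₁ hSinv₂ x (α.lmap g)
    (A := fun z : H × H => α.lmap z.1) (B := fun z : H × H => α.lmap z.2)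
    (aut_comul_p α g)
  have hε : D.counit (α.lmap g) = D.counit g := LinearMap.congr_fun α.map_counit g
  rw [hε] at h
  rw [← h]
  refine Finset.sum_congr rfl fun z _ => ?_
  rw [LinearMap.comp_apply, aut_Sinv_comm α hSinv₁ hSinv₂ z.2]

lemma eq52rhs_eq (D : HopfQuasigroupData k H) (αl : H →ₗ[k] H)
    (act : H ⊗[k] M →ₗ[k] M) (coact : M →ₗ[k] M ⊗[k] H) :
    eq52rhs D αl act coact = conv D αl (coact ∘ₗ act) := by
  apply TensorProduct.ext'
  intro h m
  have tail2 : ∀ (g : H) (X : M ⊗[k] H),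
      LinearMap.lTensor M (D.mul ∘ₗ LinearMap.lTensor H αl)
        ((TensorProduct.assoc k M H H) (X ⊗ₜ[k] g))
      = LinearMap.lTensor M (rm D (αl g)) X := by
    intro g X
    induction X using TensorProduct.induction_on with
    | zero => simp
    | tmul n w => simp
    | add X Y hX hY => simp only [TensorProduct.add_tmul, map_add, hX, hY]
  rw [conv_tmul D αl (coact ∘ₗ act) (rp_spec D h) m]
  simp only [eq52rhs, LinearMap.comp_apply, LinearMap.rTensor_tmul, rp_spec D h,
    TensorProduct.sum_tmul, map_sum, LinearEquiv.coe_coe, TensorProduct.assoc_tmul,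
    LinearMap.lTensor_tmul, TensorProduct.comm_tmul]
  exact Finset.sum_congr rfl fun z _ => tail2 z.1 (coact (act (z.2 ⊗ₜ[k] m)))

lemma ydrhs_eq (D : HopfQuasigroupData k H) (Sinv : H →ₗ[k] H) (αl βl : H →ₗ[k] H)
    (act : H ⊗[k] M →ₗ[k] M) (coact : M →ₗ[k] M ⊗[k] H) :
    (TensorProduct.map act
        (D.mul ∘ₗ TensorProduct.map (D.mul ∘ₗ βl.rTensor H) (αl ∘ₗ Sinv)) ∘ₗ
      ydShuffle k H M ∘ₗ coact.lTensor (H ⊗[k] (H ⊗[k] H)) ∘ₗ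
        (D.comul.lTensor H).rTensor M ∘ₗ D.comul.rTensor M)
    = conv D (αl ∘ₗ Sinv) (eq52lhs D βl act coact) := by
  apply TensorProduct.ext'
  intro h m
  have hstep : ∀ (x y q : H) (X : M ⊗[k] H),
      TensorProduct.map act
        (D.mul ∘ₗ TensorProduct.map (D.mul ∘ₗ βl.rTensor H) (αl ∘ₗ Sinv))
        (ydShuffle k H M ((x ⊗ₜ[k] (y ⊗ₜ[k] q)) ⊗ₜ[k] X))
      = LinearMap.lTensor M (rm D (αl (Sinv x)))
          (TensorProduct.map act (D.mul ∘ₗ βl.rTensor H)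
            ((TensorProduct.tensorTensorTensorComm k H H M H) ((y ⊗ₜ[k] q) ⊗ₜ[k] X))) := by
    intro x y q X
    induction X using TensorProduct.induction_on with
    | zero => simp
    | tmul u w => simp [ydShuffle]
    | add X Y hX hY => simp only [TensorProduct.tmul_add, map_add, hX, hY]
  have e52 : ∀ z : H × H, eq52lhs D βl act coact (z.2 ⊗ₜ[k] m)
      = ∑ w ∈ rp D z.2, TensorProduct.map act (D.mul ∘ₗ βl.rTensor H)
          ((TensorProduct.tensorTensorTensorComm k H H M H)
            ((w.1 ⊗ₜ[k] w.2) ⊗ₜ[k] coact m)) := by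
    intro z
    simp only [eq52lhs, LinearMap.comp_apply, LinearMap.rTensor_tmul, rp_spec D z.2,
      TensorProduct.sum_tmul, map_sum, LinearMap.lTensor_tmul, LinearEquiv.coe_coe]
  rw [conv_tmul D (αl ∘ₗ Sinv) (eq52lhs D βl act coact) (rp_spec D h) m]
  have expand : (LinearMap.rTensor M (D.comul.lTensor H))
        ((LinearMap.rTensor M D.comul) (h ⊗ₜ[k] m))
      = ∑ z ∈ rp D h, ∑ w ∈ rp D z.2, (z.1 ⊗ₜ[k] (w.1 ⊗ₜ[k] w.2)) ⊗ₜ[k] m := by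
    rw [LinearMap.rTensor_tmul, rp_spec D h, TensorProduct.sum_tmul, map_sum]
    refine Finset.sum_congr rfl fun z _ => ?_
    rw [LinearMap.rTensor_tmul, LinearMap.lTensor_tmul, rp_spec D z.2,
      TensorProduct.tmul_sum, TensorProduct.sum_tmul]
  simp only [LinearMap.comp_apply]
  rw [expand]
  simp only [map_sum]
  refine Finset.sum_congr rfl fun z _ => ?_
  rw [e52, map_sum]
  refine Finset.sum_congr rfl fun w _ => ?_
  rw [LinearMap.lTensor_tmul]
  exact hstep z.1 w.1 w.2 (coact m)

end YDAux
end MainSection2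

/-- Proposition 5.2: For a Hopf quasigroup `H` with bijective antipode and
automorphisms `α, β` commuting with `S`, and `M` a left `H`-quasimodule and right
`H`-comodule, the compatibility condition
`ρ(h·m) = Σ h₂₁·m₀ ⊗ (β(h₂₂)m₁)α(S⁻¹(h₁))` (Eq. (5.1)) holds iff
`Σ h₁·m₀ ⊗ β(h₂)m₁ = Σ (h₂·m)₀ ⊗ (h₂·m)₁α(h₁)` (Eq. (5.2)) holds. -/
theorem yd_compat_iff (D : HopfQuasigroupData k H) (S : H →ₗ[k] H) (hS : D.IsAntipode S)
    (Sinv : H →ₗ[k] H) (hSinv₁ : S ∘ₗ Sinv = LinearMap.id)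
    (hSinv₂ : Sinv ∘ₗ S = LinearMap.id)
    (α β : HopfQuasigroupAut D S) (act : H ⊗[k] M →ₗ[k] M) (coact : M →ₗ[k] M ⊗[k] H)
    (hact : IsQuasimodule D S act) (hcoact : IsComodule D coact) :
    YDCompat D Sinv α.lmap β.lmap act coact ↔
      eq52lhs D β.lmap act coact = eq52rhs D α.lmap act coact := by
  have h1 : eq52rhs D α.lmap act coact = YDAux.conv D α.lmap (coact ∘ₗ act) :=
    YDAux.eq52rhs_eq D α.lmap act coact
  have h2 := YDAux.ydrhs_eq D Sinv α.lmap β.lmap act coact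
  unfold YDCompat
  constructor
  · intro hyd
    rw [h1, hyd, h2]
    exact (YDAux.convK D (α.lmap ∘ₗ Sinv) α.lmap
      (fun g x => YDAux.P2 hS hSinv₁ hSinv₂ α g x) (eq52lhs D β.lmap act coact)).symm
  · intro h52
    rw [h2, h52, h1]
    exact (YDAux.convK D α.lmap (α.lmap ∘ₗ Sinv)
      (fun g x => YDAux.P1 hS hSinv₁ hSinv₂ α g x) (coact ∘ₗ act)).symm

end Statement10
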